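/- Let f : ℝ≥0 → ℝ≥0 be continuous with f(0) = 0, compact support, and sup f ≥ h > 0. Let t be a time such that p_f(t) lies in the h-trimming Tr^h(T_f) of the tree coded by f. Then there exists s ≥ 0 such that inf over [min(s,t), max(s,t)] of f equals f(t) and f(s) − f(t) ≥ h; conversely, if such s exists then p_f(t) ∈ Tr^h(T_f). -/

import Mathlib

open Set
open scoped NNReal Interval

/-- The pseudo-distance `d_f(s,t) = f s + f t − 2 inf_{[s∧t, s∨t]} f` on times; the real
tree `T_f` coded by `f` is the quotient of `ℝ≥0` by `d_f = 0`, with projection `p_f` and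
root `p_f 0`. -/
noncomputable def treeDist (f : ℝ≥0 → ℝ) (s t : ℝ≥0) : ℝ :=
  f s + f t - 2 * sInf (f '' Set.Icc (min s t) (max s t))

/-- `ancT f a b` means `p_f a ⪯ p_f b` in the tree coded by `f`, i.e.
`inf_{[a∧b, a∨b]} f = f a`. -/
def ancT (f : ℝ≥0 → ℝ) (a b : ℝ≥0) : Prop :=
  sInf (f '' Set.Icc (min a b) (max a b)) = f a

/-- `p_f t` belongs to the `h`-trimming `Tr^h(T_f)`, i.e.
`sup { d_f(p_f t, y) : y ⪰ p_f t } ≥ h`. -/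
def TrimTime (h : ℝ) (f : ℝ≥0 → ℝ) (t : ℝ≥0) : Prop :=
  h ≤ sSup ((fun s => treeDist f t s) '' {s | ancT f t s})

/-!
The descendants of `p_f t` are the times in the connected component of `{f ≥ f t}` containing
`t`; this set is closed, and along it `d_f(t, ·) = f - f t`. Since `f` vanishes beyond `K`,
every descendant after `max K t` has the same value as `max K t`, itself a descendant, so the
maximum of `f` over the descendants is attained on the compact window `[0, max K t]`: the
supremum defining the trimming is a maximum.
-/

theorem IsClosed.connectedComponentIn {X : Type*} [TopologicalSpace X] {F : Set X}
    (hF : IsClosed F) (x : X) : IsClosed (connectedComponentIn F x) := by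
  by_cases hx : x ∈ F
  · refine isClosed_of_closure_subset ?_
    exact isPreconnected_connectedComponentIn.closure.subset_connectedComponentIn
      (subset_closure (mem_connectedComponentIn hx))
      (closure_minimal (connectedComponentIn_subset F x) hF)
  · rw [connectedComponentIn_eq_empty hx]
    exact isClosed_empty

theorem mem_connectedComponentIn_iff_uIcc_subset {α : Type*} [ConditionallyCompleteLinearOrder α]
    [TopologicalSpace α] [OrderTopology α] [DenselyOrdered α] {F : Set α} {x y : α} :
    y ∈ connectedComponentIn F x ↔ [[x, y]] ⊆ F := by
  refine ⟨fun hy => ?_, fun h => ?_⟩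
  · have hx : x ∈ F := connectedComponentIn_nonempty_iff.1 ⟨y, hy⟩
    exact (isPreconnected_connectedComponentIn.ordConnected.uIcc_subset
      (mem_connectedComponentIn hx) hy).trans (connectedComponentIn_subset F x)
  · exact isPreconnected_uIcc.subset_connectedComponentIn left_mem_uIcc h right_mem_uIcc

section Descendants

variable {f : ℝ≥0 → ℝ} {t s : ℝ≥0}

theorem ancT_self (f : ℝ≥0 → ℝ) (t : ℝ≥0) : ancT f t t := by
  simp [ancT]

theorem treeDist_eq_of_ancT (hs : ancT f t s) : treeDist f t s = f s - f t := by
  rw [treeDist, hs]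
  ring

theorem ancT_iff_forall_le (hf : Continuous f) :
    ancT f t s ↔ ∀ u ∈ [[t, s]], f t ≤ f u := by
  have hbdd : BddBelow (f '' [[t, s]]) := (isCompact_uIcc.image hf).bddBelow
  refine ⟨fun hs u hu => ?_, fun h => ?_⟩
  · exact hs ▸ csInf_le hbdd (mem_image_of_mem f hu)
  · exact IsLeast.csInf_eq ⟨mem_image_of_mem f left_mem_uIcc, forall_mem_image.2 h⟩

theorem ancT_of_mem_uIcc (hf : Continuous f) (hs : ancT f t s) {u : ℝ≥0} (hu : u ∈ [[t, s]]) :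
    ancT f t u :=
  (ancT_iff_forall_le hf).2 fun _ hv =>
    (ancT_iff_forall_le hf).1 hs _ (uIcc_subset_uIcc_left hu hv)

theorem setOf_ancT_eq_connectedComponentIn (hf : Continuous f) (t : ℝ≥0) :
    {s | ancT f t s} = connectedComponentIn (f ⁻¹' Ici (f t)) t := by
  ext s
  change ancT f t s ↔ _
  rw [ancT_iff_forall_le hf, mem_connectedComponentIn_iff_uIcc_subset]
  rfl

theorem isClosed_setOf_ancT (hf : Continuous f) (t : ℝ≥0) : IsClosed {s | ancT f t s} := by
  rw [setOf_ancT_eq_connectedComponentIn hf]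
  exact (isClosed_Ici.preimage hf).connectedComponentIn t

theorem exists_ancT_isMaxOn (hf : Continuous f) {K : ℝ≥0} (hK : ∀ u, K ≤ u → f u = 0)
    (t : ℝ≥0) : ∃ s₀, ancT f t s₀ ∧ IsMaxOn f {s | ancT f t s} s₀ := by
  set W := {s | ancT f t s} ∩ Icc 0 (max K t)
  have hW : IsCompact W := isCompact_Icc.inter_left (isClosed_setOf_ancT hf t)
  have htW : t ∈ W := ⟨ancT_self f t, zero_le, le_max_right _ _⟩
  obtain ⟨s₀, hs₀, hmax⟩ := hW.exists_isMaxOn ⟨t, htW⟩ hf.continuousOn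
  refine ⟨s₀, hs₀.1, isMaxOn_iff.2 fun s hs => ?_⟩
  rcases le_or_gt s (max K t) with hsW | hsW
  · exact hmax ⟨hs, zero_le, hsW⟩
  · have hKt : max K t ∈ [[t, s]] := mem_uIcc_of_le (le_max_right _ _) hsW.le
    have hfs : f s = f (max K t) := by
      rw [hK s (le_max_left K t |>.trans hsW.le), hK _ (le_max_left K t)]
    exact hfs ▸ isMaxOn_iff.1 hmax _ ⟨ancT_of_mem_uIcc hf hs hKt, zero_le, le_rfl⟩

theorem isGreatest_treeDist_image {s₀ : ℝ≥0} (hs₀ : ancT f t s₀)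
    (hmax : IsMaxOn f {s | ancT f t s} s₀) :
    IsGreatest ((fun s => treeDist f t s) '' {s | ancT f t s}) (f s₀ - f t) := by
  refine ⟨⟨s₀, hs₀, treeDist_eq_of_ancT hs₀⟩, forall_mem_image.2 fun s hs => ?_⟩
  rw [treeDist_eq_of_ancT hs]
  linarith [isMaxOn_iff.1 hmax s hs]

end Descendants

theorem trimTime_iff_subexcursion
    (h : ℝ) (f : ℝ≥0 → ℝ) (hf : Continuous f)
    (K : ℝ≥0) (hK : ∀ u, K ≤ u → f u = 0)
    (t : ℝ≥0) :
    TrimTime h f t ↔ ∃ s, ancT f t s ∧ h ≤ f s - f t := by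
  obtain ⟨s₀, hs₀, hmax⟩ := exists_ancT_isMaxOn hf hK t
  rw [TrimTime, (isGreatest_treeDist_image hs₀ hmax).csSup_eq]
  refine ⟨fun hh => ⟨s₀, hs₀, hh⟩, fun ⟨s, hs, hhs⟩ => ?_⟩
  linarith [isMaxOn_iff.1 hmax s hs]
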